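/- Suppose (η, ω_G) : I → ℝ^m × ℝ^{n_g} is a differentiable solution of η' = B_Sᵀ ω_G, M ω_G' = −A ω_G − B_G Γ η + u, with η(0) ∈ im Bᵀ where B = col(B_G, B_L), and let p* = B_L Γ η(0). Define Π = I − B_L⁺B_L and η_S = Πᵀ η. Then (η_S, ω_G) is a solution of the linear reduced model η_S' = B_Sᵀ ω_G, M ω_G' = −A ω_G − B_S Γ η_S + u − p̂, where p̂ = B_G Γ B_Lᵀ (B_L Γ B_Lᵀ)⁻¹ p*. -/

import Mathlib

/-!
The rows of `B_L Γ` annihilate the range of `B_Sᵀ = Πᵀ B_Gᵀ`, so `B_L Γ η` is conserved along the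
solution and equals `p*`. On the other hand `Γ` splits as `Π Γ Πᵀ + B_L⁺ B_L Γ`, hence
`B_G Γ η = B_S Γ η_S + B_G B_L⁺ (B_L Γ η) = B_S Γ η_S + p̂`, which turns the swing equation into the
reduced one. Finally `Π` is idempotent, so `η_S' = Πᵀ B_Sᵀ ω_G = B_Sᵀ ω_G`.
-/

open Matrix

theorem HasDerivAt.matrix_mulVec {m n : Type*} [Fintype m] [Fintype n]
    (A : Matrix m n ℝ) {f : ℝ → n → ℝ} {f' : n → ℝ} {t : ℝ} (h : HasDerivAt f f' t) :
    HasDerivAt (fun s => A *ᵥ f s) (A *ᵥ f') t :=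
  (LinearMap.toContinuousLinearMap (Matrix.mulVecLin A)).hasFDerivAt.comp_hasDerivAt t h

theorem Convex.eq_of_forall_hasDerivWithinAt_zero {E : Type*} [NormedAddCommGroup E]
    [NormedSpace ℝ E] {f : ℝ → E} {s : Set ℝ} (hs : Convex ℝ s)
    (hf : ∀ x ∈ s, HasDerivWithinAt f 0 s x) {x y : ℝ} (hx : x ∈ s) (hy : y ∈ s) :
    f y = f x := by
  have := hs.norm_image_sub_le_of_norm_hasDerivWithin_le hf (fun _ _ => norm_zero.le) hx hy
  rwa [zero_mul, norm_le_zero_iff, sub_eq_zero] at this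

theorem Convex.mulVec_eq_of_forall_hasDerivAt {m n : Type*} [Fintype m] [Fintype n]
    (L : Matrix n m ℝ) {η v : ℝ → m → ℝ} {s : Set ℝ} (hs : Convex ℝ s)
    (hη : ∀ t ∈ s, HasDerivAt η (v t) t) (hv : ∀ t ∈ s, L *ᵥ v t = 0)
    {t₀ t : ℝ} (ht₀ : t₀ ∈ s) (ht : t ∈ s) : L *ᵥ η t = L *ᵥ η t₀ :=
  hs.eq_of_forall_hasDerivWithinAt_zero
    (fun x hx => hv x hx ▸ ((hη x hx).matrix_mulVec L).hasDerivWithinAt) ht₀ ht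

namespace Matrix

variable {R : Type*} [CommRing R] {m n : Type*} [Fintype m] [Fintype n] [DecidableEq n]

/-- For `B = B_L` and `D = Γ` this is `B_L⁺`. -/
noncomputable def weightedRightInv (B : Matrix n m R) (D : Matrix m m R) : Matrix m n R :=
  D * Bᵀ * (B * D * Bᵀ)⁻¹

/-- For `B = B_L` and `D = Γ` this is `Π`, the projection onto `ker B` along the range of `D Bᵀ`. -/
noncomputable def kerProjection [DecidableEq m] (B : Matrix n m R) (D : Matrix m m R) : Matrix m m R :=
  1 - weightedRightInv B D * B

variable {B : Matrix n m R} {D : Matrix m m R}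

theorem mul_weightedRightInv (hS : IsUnit (B * D * Bᵀ).det) : B * weightedRightInv B D = 1 := by
  rw [weightedRightInv, ← Matrix.mul_assoc, ← Matrix.mul_assoc, mul_nonsing_inv _ hS]

theorem weightedRightInv_mul_mul_mul_transpose (hS : IsUnit (B * D * Bᵀ).det) :
    weightedRightInv B D * (B * D * Bᵀ) = D * Bᵀ := by
  rw [weightedRightInv, Matrix.mul_assoc, nonsing_inv_mul _ hS, Matrix.mul_one]

variable [DecidableEq m]

theorem isIdempotentElem_kerProjection (hS : IsUnit (B * D * Bᵀ).det) :
    IsIdempotentElem (kerProjection B D) := by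
  refine IsIdempotentElem.one_sub ?_
  rw [IsIdempotentElem, Matrix.mul_assoc, ← Matrix.mul_assoc B, mul_weightedRightInv hS,
    Matrix.one_mul]

theorem kerProjection_mul_mul_transpose (hS : IsUnit (B * D * Bᵀ).det) :
    kerProjection B D * D * Bᵀ = 0 := by
  rw [kerProjection, Matrix.sub_mul, Matrix.sub_mul, Matrix.one_mul, Matrix.mul_assoc _ B,
    Matrix.mul_assoc, weightedRightInv_mul_mul_mul_transpose hS, sub_self]

theorem mul_mul_kerProjection_transpose (hD : Dᵀ = D) (hS : IsUnit (B * D * Bᵀ).det) :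
    B * D * (kerProjection B D)ᵀ = 0 := by
  rw [← transpose_eq_zero, transpose_mul, transpose_mul, transpose_transpose, hD,
    ← Matrix.mul_assoc, kerProjection_mul_mul_transpose hS]

theorem kerProjection_mul_mul_transpose_add (hS : IsUnit (B * D * Bᵀ).det) :
    kerProjection B D * D * (kerProjection B D)ᵀ + weightedRightInv B D * (B * D) = D := by
  have hPDPT : kerProjection B D * D * (kerProjection B D)ᵀ = kerProjection B D * D := by
    rw [kerProjection, transpose_sub, transpose_one, Matrix.mul_sub, Matrix.mul_one,
      transpose_mul, ← Matrix.mul_assoc, ← kerProjection, kerProjection_mul_mul_transpose hS,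
      Matrix.zero_mul, sub_zero]
  rw [hPDPT, kerProjection, Matrix.sub_mul, Matrix.one_mul, Matrix.mul_assoc, sub_add_cancel]

end Matrix

theorem projection_recovers_linear_reduced_model_general
    {ng nl m : ℕ}
    (BG : Matrix (Fin ng) (Fin m) ℝ) (BL : Matrix (Fin nl) (Fin m) ℝ)
    (γ : Fin m → ℝ)
    (hinv : IsUnit (BL * diagonal γ * BLᵀ).det)
    (Md Ad : Fin ng → ℝ)
    (u : Fin ng → ℝ)
    (I : Set ℝ) (hI0 : (0 : ℝ) ∈ I) (hIconv : Convex ℝ I)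
    (η : ℝ → Fin m → ℝ) (ωG ωG' : ℝ → Fin ng → ℝ)
    (hη : ∀ t ∈ I, HasDerivAt η
      ((BG * (1 - (diagonal γ * BLᵀ * (BL * diagonal γ * BLᵀ)⁻¹) * BL))ᵀ *ᵥ ωG t) t)
    (hswing : ∀ t ∈ I,
      diagonal Md *ᵥ ωG' t =
        -(diagonal Ad *ᵥ ωG t) - (BG * diagonal γ) *ᵥ η t + u) :
    (∀ t ∈ I,
      HasDerivAt (fun s => (1 - (diagonal γ * BLᵀ * (BL * diagonal γ * BLᵀ)⁻¹) * BL)ᵀ *ᵥ η s)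
        ((BG * (1 - (diagonal γ * BLᵀ * (BL * diagonal γ * BLᵀ)⁻¹) * BL))ᵀ *ᵥ ωG t) t) ∧
    (∀ t ∈ I,
      diagonal Md *ᵥ ωG' t =
        -(diagonal Ad *ᵥ ωG t) -
          ((BG * (1 - (diagonal γ * BLᵀ * (BL * diagonal γ * BLᵀ)⁻¹) * BL)) * diagonal γ) *ᵥ
            ((1 - (diagonal γ * BLᵀ * (BL * diagonal γ * BLᵀ)⁻¹) * BL)ᵀ *ᵥ η t)
          + u - (BG * diagonal γ * BLᵀ * (BL * diagonal γ * BLᵀ)⁻¹) *ᵥ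
              ((BL * diagonal γ) *ᵥ η 0)) := by
  have hP : 1 - diagonal γ * BLᵀ * (BL * diagonal γ * BLᵀ)⁻¹ * BL =
      kerProjection BL (diagonal γ) := rfl
  have hpHat : BG * diagonal γ * BLᵀ * (BL * diagonal γ * BLᵀ)⁻¹ =
      BG * weightedRightInv BL (diagonal γ) := by
    simp only [weightedRightInv, Matrix.mul_assoc]
  rw [hP] at hη ⊢
  rw [hpHat]
  set P := kerProjection BL (diagonal γ)
  have hconserved : ∀ t ∈ I, (BL * diagonal γ) *ᵥ η t = (BL * diagonal γ) *ᵥ η 0 :=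
    fun t ht => hIconv.mulVec_eq_of_forall_hasDerivAt _ hη (fun s _ => by
      rw [mulVec_mulVec, transpose_mul, ← Matrix.mul_assoc,
        mul_mul_kerProjection_transpose (diagonal_transpose γ) hinv, Matrix.zero_mul,
        zero_mulVec]) hI0 ht
  refine ⟨fun t ht => ?_, fun t ht => ?_⟩
  · convert (hη t ht).matrix_mulVec Pᵀ using 1
    rw [mulVec_mulVec, ← transpose_mul, Matrix.mul_assoc, (isIdempotentElem_kerProjection hinv).eq]
  · have hsplit : (BG * P * diagonal γ) *ᵥ (Pᵀ *ᵥ η t) +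
        (BG * weightedRightInv BL (diagonal γ)) *ᵥ ((BL * diagonal γ) *ᵥ η t) =
        (BG * diagonal γ) *ᵥ η t := by
      rw [mulVec_mulVec, mulVec_mulVec, ← add_mulVec, Matrix.mul_assoc BG P,
        Matrix.mul_assoc BG, Matrix.mul_assoc BG, ← Matrix.mul_add,
        kerProjection_mul_mul_transpose_add hinv]
    rw [hswing t ht, ← hconserved t ht, ← hsplit]
    abel

theorem projection_recovers_linear_reduced_model
    {ng nl m : ℕ} (hng : 0 < ng) (hnl : 0 < nl) (hm : 0 < m)
    (BG : Matrix (Fin ng) (Fin m) ℝ) (BL : Matrix (Fin nl) (Fin m) ℝ)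
    (γ : Fin m → ℝ) (hγ : ∀ k, 0 < γ k)
    (hrank : BL.rank = nl)
    (hinv : IsUnit (BL * diagonal γ * BLᵀ).det)
    (Md Ad : Fin ng → ℝ) (hM : ∀ i, 0 < Md i) (hA : ∀ i, 0 < Ad i)
    (u : Fin ng → ℝ)
    (I : Set ℝ) (hI0 : (0 : ℝ) ∈ I) (hIconv : Convex ℝ I)
    (η : ℝ → Fin m → ℝ) (ωG ωG' : ℝ → Fin ng → ℝ)
    (hη : ∀ t ∈ I, HasDerivAt η
      ((BG * (1 - (diagonal γ * BLᵀ * (BL * diagonal γ * BLᵀ)⁻¹) * BL))ᵀ *ᵥ ωG t) t)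
    (hωG : ∀ t ∈ I, HasDerivAt ωG (ωG' t) t)
    (hswing : ∀ t ∈ I,
      diagonal Md *ᵥ ωG' t =
        -(diagonal Ad *ᵥ ωG t) - (BG * diagonal γ) *ᵥ η t + u)
    (hinit : ∃ x : Fin ng ⊕ Fin nl → ℝ, η 0 = (Matrix.fromRows BG BL)ᵀ *ᵥ x) :
    (∀ t ∈ I,
      HasDerivAt (fun s => (1 - (diagonal γ * BLᵀ * (BL * diagonal γ * BLᵀ)⁻¹) * BL)ᵀ *ᵥ η s)
        ((BG * (1 - (diagonal γ * BLᵀ * (BL * diagonal γ * BLᵀ)⁻¹) * BL))ᵀ *ᵥ ωG t) t) ∧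
    (∀ t ∈ I,
      diagonal Md *ᵥ ωG' t =
        -(diagonal Ad *ᵥ ωG t) -
          ((BG * (1 - (diagonal γ * BLᵀ * (BL * diagonal γ * BLᵀ)⁻¹) * BL)) * diagonal γ) *ᵥ
            ((1 - (diagonal γ * BLᵀ * (BL * diagonal γ * BLᵀ)⁻¹) * BL)ᵀ *ᵥ η t)
          + u - (BG * diagonal γ * BLᵀ * (BL * diagonal γ * BLᵀ)⁻¹) *ᵥ
              ((BL * diagonal γ) *ᵥ η 0)) :=
  projection_recovers_linear_reduced_model_general BG BL γ hinv Md Ad u I hI0 hIconv η ωG ωG' hη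
    hswing
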